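/- In the feedback network built from a tree concept hierarchy with max level L and threshold τ = rk: if B is presented at all times ≥ t, then every concept c ∈ supp_{r,f}(B) has rep(c) fire at some time ≤ t + 2L. -/

import Mathlib

open scoped Classical
noncomputable section

/-- A concept hierarchy: concepts at levels `0..L`, each concept at level `≥ 1`
has exactly `k` children one level below, level-0 concepts have no children,
there are exactly `k` top-level concepts, and every non-top concept has a parent. -/
structure ConceptHierarchy (α : Type) [DecidableEq α] where
  L : ℕ
  k : ℕ
  concepts : Finset α
  level : α → ℕ
  children : α → Finset α
  level_le : ∀ c ∈ concepts, level c ≤ L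
  children_mem : ∀ c ∈ concepts, ∀ c' ∈ children c, c' ∈ concepts
  children_level : ∀ c ∈ concepts, ∀ c' ∈ children c, level c' + 1 = level c
  children_card : ∀ c ∈ concepts, 1 ≤ level c → (children c).card = k
  children_leaf : ∀ c ∈ concepts, level c = 0 → children c = ∅
  top_card : (concepts.filter (fun c => level c = L)).card = k
  has_parent : ∀ c ∈ concepts, level c < L → ∃ c' ∈ concepts, c ∈ children c'

namespace ConceptHierarchy

variable {α : Type} [DecidableEq α]

/-- The parents of a concept. -/
def parents (H : ConceptHierarchy α) (c : α) : Finset α :=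
  H.concepts.filter (fun c' => c ∈ H.children c')

/-- Limited overlap: each concept at level `≥ 1` shares at most `o·k` children
with the union of the other concepts at the same level. -/
def LimitedOverlap (H : ConceptHierarchy α) (o : ℝ) : Prop :=
  ∀ c ∈ H.concepts, 1 ≤ H.level c →
    (((H.children c).filter (fun d => ∃ c' ∈ H.concepts, c' ≠ c ∧
        H.level c' = H.level c ∧ d ∈ H.children c')).card : ℝ) ≤ o * H.k

/-- Tree hierarchy: no overlap among child sets of distinct same-level concepts. -/
def IsTree (H : ConceptHierarchy α) : Prop :=
  ∀ c ∈ H.concepts, ∀ c' ∈ H.concepts, H.level c = H.level c' → c ≠ c' →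
    Disjoint (H.children c) (H.children c')

/-- Descendant relation: reflexive-transitive closure of the children relation. -/
inductive Desc (H : ConceptHierarchy α) : α → α → Prop
  | refl (c : α) : Desc H c c
  | step {c d e : α} : d ∈ H.children c → Desc H d e → Desc H c e

/-- The level-0 descendants of a concept. -/
def leaves (H : ConceptHierarchy α) (c : α) : Finset α :=
  H.concepts.filter (fun d => H.Desc c d ∧ H.level d = 0)

/-- Level-indexed bottom-up support sets: `S(0) = B ∩ C₀`,
`S(ℓ) = {c at level ℓ : |children(c) ∩ S(ℓ-1)| ≥ r·k}`. -/
def suppL (H : ConceptHierarchy α) (r : ℝ) (B : Finset α) : ℕ → Finset α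
  | 0 => B ∩ H.concepts.filter (fun c => H.level c = 0)
  | (ℓ+1) => H.concepts.filter (fun c => H.level c = ℓ + 1 ∧
      r * H.k ≤ ((H.children c ∩ suppL H r B ℓ).card : ℝ))

/-- `supp_r(B) = ⋃_ℓ S(ℓ)`. -/
def supp (H : ConceptHierarchy α) (r : ℝ) (B : Finset α) : Set α :=
  ⋃ ℓ, ↑(H.suppL r B ℓ)

/-- Time-and-level-indexed support sets with feedback strength `f`:
`S(0,t) = B`; `S(ℓ,0) = ∅` for `ℓ ≥ 1`; and
`S(ℓ,t) = S(ℓ,t-1) ∪ {c at level ℓ : |children(c) ∩ S(ℓ-1,t-1)| + f·|parents(c) ∩ S(ℓ+1,t-1)| ≥ r·k}`. -/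
def suppFB (H : ConceptHierarchy α) (r f : ℝ) (B : Finset α) : ℕ → ℕ → Finset α
  | 0, _ => B
  | (_+1), 0 => ∅
  | (ℓ+1), (t+1) => suppFB H r f B (ℓ+1) t ∪
      H.concepts.filter (fun c => H.level c = ℓ + 1 ∧
        r * H.k ≤ ((H.children c ∩ suppFB H r f B ℓ t).card : ℝ) +
          f * ((H.parents c ∩ suppFB H r f B (ℓ+2) t).card : ℝ))
  termination_by ℓ t => t

/-- `supp_{r,f}(B,*,t) = ⋃_ℓ S(ℓ,t)`. -/
def suppFBatTime (H : ConceptHierarchy α) (r f : ℝ) (B : Finset α) (t : ℕ) : Set α :=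
  ⋃ ℓ, ↑(H.suppFB r f B ℓ t)

/-- `supp_{r,f}(B) = ⋃_{ℓ,t} S(ℓ,t)`. -/
def suppFBSet (H : ConceptHierarchy α) (r f : ℝ) (B : Finset α) : Set α :=
  ⋃ t, H.suppFBatTime r f B t

end ConceptHierarchy

/-- Feed-forward 0/1 weights: weight 1 from the rep of a child to the rep of its
parent, weight 0 otherwise. -/
def ffWeight {α ν : Type} [DecidableEq α] (H : ConceptHierarchy α) (rep : α → ν)
    (u v : ν) : ℝ :=
  if ∃ c ∈ H.concepts, ∃ c' ∈ H.children c, u = rep c' ∧ v = rep c then 1 else 0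

/-- Feedback-network weights: weight 1 upward (rep of child to rep of parent),
weight `f` downward (rep of parent to rep of child), 0 otherwise. -/
def fbWeight {α ν : Type} [DecidableEq α] (H : ConceptHierarchy α) (rep : α → ν)
    (f : ℝ) (u v : ν) : ℝ :=
  if ∃ c ∈ H.concepts, ∃ c' ∈ H.children c, u = rep c' ∧ v = rep c then 1
  else if ∃ c ∈ H.concepts, ∃ c' ∈ H.children c, u = rep c ∧ v = rep c' then f
  else 0

/-!
The network simulates the support sets: the weighted input of `rep c` is the number of active
children of `c` plus `f` times the number of active parents, so `rep c` fires at time `t + s`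
exactly when `c ∈ S(level c, s)`.

In a tree every concept has at most one parent. Hence a child `d` of `c` that is not in the
bottom-up support `suppL` can only have entered `S` through feedback from `c` itself, at an
earlier time. So every `c ∈ S(ℓ+1, t)` meets its threshold with children from `suppL ℓ`, which is
contained in `S(ℓ, ℓ)`, and parents from `S(ℓ+2, t')` for some `t' < t`. Strong induction on `t`
puts those parents into `S(ℓ+2, 2L-ℓ-2)`, hence `c` into `S(ℓ+1, 2L-ℓ-1)`.
-/

namespace ConceptHierarchy

variable {α : Type} [DecidableEq α] (H : ConceptHierarchy α)

def MeetsThreshold (r f : ℝ) (X Y : Finset α) (c : α) : Prop :=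
  r * H.k ≤ ((H.children c ∩ X).card : ℝ) + f * ((H.parents c ∩ Y).card : ℝ)

variable {H} {r f : ℝ} {X X' Y Y' : Finset α} {c : α}

theorem MeetsThreshold.mono_left (h : H.MeetsThreshold r f X Y c)
    (hX : ∀ d ∈ H.children c, d ∈ X → d ∈ X') : H.MeetsThreshold r f X' Y c := by
  refine h.trans (add_le_add_left ?_ _)
  exact_mod_cast Finset.card_le_card fun d hd => by
    obtain ⟨hdc, hdX⟩ := Finset.mem_inter.mp hd
    exact Finset.mem_inter.mpr ⟨hdc, hX d hdc hdX⟩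

theorem MeetsThreshold.mono_right (hf : 0 ≤ f) (h : H.MeetsThreshold r f X Y c)
    (hY : ∀ p ∈ H.parents c, p ∈ Y → p ∈ Y') : H.MeetsThreshold r f X Y' c := by
  refine h.trans (add_le_add_right (mul_le_mul_of_nonneg_left ?_ hf) _)
  exact_mod_cast Finset.card_le_card fun p hp => by
    obtain ⟨hpc, hpY⟩ := Finset.mem_inter.mp hp
    exact Finset.mem_inter.mpr ⟨hpc, hY p hpc hpY⟩

variable (H r f) (B : Finset α)

@[simp]
theorem suppFB_zero (t : ℕ) : H.suppFB r f B 0 t = B := by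
  cases t <;> rw [suppFB]

@[simp]
theorem suppFB_succ_zero (ℓ : ℕ) : H.suppFB r f B (ℓ + 1) 0 = ∅ := by
  rw [suppFB]

theorem suppFB_succ_succ (ℓ t : ℕ) : H.suppFB r f B (ℓ + 1) (t + 1) =
    H.suppFB r f B (ℓ + 1) t ∪ H.concepts.filter (fun c => H.level c = ℓ + 1 ∧
      H.MeetsThreshold r f (H.suppFB r f B ℓ t) (H.suppFB r f B (ℓ + 2) t) c) := by
  rw [suppFB]; rfl

theorem suppFB_monotone (ℓ : ℕ) : Monotone (H.suppFB r f B ℓ) := by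
  refine monotone_nat_of_le_succ fun t => ?_
  cases ℓ with
  | zero => simp
  | succ ℓ => rw [suppFB_succ_succ]; exact Finset.subset_union_left

variable {H r f B}

theorem suppFB_subset_filter_level (hB : ∀ b ∈ B, b ∈ H.concepts ∧ H.level b = 0) (ℓ t : ℕ) :
    H.suppFB r f B ℓ t ⊆ H.concepts.filter (H.level · = ℓ) := by
  intro c hc
  rw [Finset.mem_filter]
  induction t with
  | zero => cases ℓ <;> simp_all
  | succ t ih =>
    cases ℓ with
    | zero => simp_all
    | succ ℓ =>
      rw [suppFB_succ_succ, Finset.mem_union, Finset.mem_filter] at hc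
      exact hc.elim ih fun h => ⟨h.1, h.2.1⟩

theorem mem_suppFB_succ_succ (hf : 0 ≤ f) {ℓ s : ℕ} :
    c ∈ H.suppFB r f B (ℓ + 1) (s + 1) ↔ c ∈ H.concepts ∧ H.level c = ℓ + 1 ∧
      H.MeetsThreshold r f (H.suppFB r f B ℓ s) (H.suppFB r f B (ℓ + 2) s) c := by
  induction s with
  | zero => simp [suppFB_succ_succ]
  | succ s ih =>
    rw [suppFB_succ_succ, Finset.mem_union, ih, Finset.mem_filter]
    refine ⟨?_, Or.inr⟩
    rintro (⟨hc, hlev, h⟩ | h)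
    · refine ⟨hc, hlev, (h.mono_left ?_).mono_right hf ?_⟩ <;>
        exact fun _ _ => (suppFB_monotone H r f B _ s.le_succ ·)
    · exact h

theorem suppL_zero_eq (hB : ∀ b ∈ B, b ∈ H.concepts ∧ H.level b = 0) : H.suppL r B 0 = B := by
  ext b
  simp only [suppL, Finset.mem_inter, Finset.mem_filter]
  exact ⟨And.left, fun h => ⟨h, hB b h⟩⟩

theorem mem_suppL_succ {ℓ : ℕ} :
    c ∈ H.suppL r B (ℓ + 1) ↔ c ∈ H.concepts ∧ H.level c = ℓ + 1 ∧
      r * H.k ≤ ((H.children c ∩ H.suppL r B ℓ).card : ℝ) := by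
  simp [suppL]

theorem suppL_subset_suppFB (hf : 0 ≤ f) (hB : ∀ b ∈ B, b ∈ H.concepts ∧ H.level b = 0)
    (ℓ : ℕ) : H.suppL r B ℓ ⊆ H.suppFB r f B ℓ ℓ := by
  induction ℓ with
  | zero => rw [suppL_zero_eq hB, suppFB_zero]
  | succ ℓ ih =>
    intro c hc
    obtain ⟨hcC, hlev, hth⟩ := mem_suppL_succ.mp hc
    have : H.MeetsThreshold r f (H.suppL r B ℓ) ∅ c := by simpa [MeetsThreshold] using hth
    exact (mem_suppFB_succ_succ hf).mpr
      ⟨hcC, hlev, (this.mono_left fun _ _ hd => ih hd).mono_right hf (by simp)⟩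

theorem IsTree.eq_of_mem_children (hT : H.IsTree) {p d : α} (hp : p ∈ H.concepts)
    (hc : c ∈ H.concepts) (hlev : H.level p = H.level c) (hdp : d ∈ H.children p)
    (hdc : d ∈ H.children c) : p = c :=
  by_contra fun hne => Finset.disjoint_left.mp (hT p hp c hc hlev hne) hdp hdc

theorem IsTree.mem_of_meetsThreshold_of_notMem_suppL (hT : H.IsTree) {d : α} {ℓ : ℕ}
    (hc : c ∈ H.concepts) (hdc : d ∈ H.children c) (hdlev : H.level d = ℓ + 1)
    (hdS : d ∉ H.suppL r B (ℓ + 1)) (hY : ∀ p ∈ Y, H.level p = H.level c)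
    (hth : H.MeetsThreshold r f (H.suppL r B ℓ) Y d) : c ∈ Y := by
  by_contra hcY
  have hnoparent : H.parents d ∩ Y = ∅ := by
    refine Finset.eq_empty_of_forall_notMem fun p hp => ?_
    obtain ⟨hpd, hpY⟩ := Finset.mem_inter.mp hp
    obtain ⟨hpC, hdp⟩ := Finset.mem_filter.mp hpd
    exact hcY (hT.eq_of_mem_children hpC hc (hY p hpY) hdp hdc ▸ hpY)
  refine hdS (mem_suppL_succ.mpr ⟨H.children_mem c hc d hdc, hdlev, ?_⟩)
  simpa [MeetsThreshold, hnoparent] using hth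

theorem IsTree.exists_lt_meetsThreshold_suppL (hT : H.IsTree)
    (hB : ∀ b ∈ B, b ∈ H.concepts ∧ H.level b = 0) (t : ℕ) :
    ∀ ℓ, ∀ c ∈ H.suppFB r f B (ℓ + 1) t,
      ∃ t' < t, H.MeetsThreshold r f (H.suppL r B ℓ) (H.suppFB r f B (ℓ + 2) t') c := by
  induction t using Nat.strong_induction_on with
  | _ t IH =>
    intro ℓ c hc
    obtain _ | n := t
    · simp at hc
    rw [suppFB_succ_succ, Finset.mem_union, Finset.mem_filter] at hc
    obtain hold | ⟨hcC, hclev, hth⟩ := hc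
    · obtain ⟨t', ht', h⟩ := IH n n.lt_succ_self ℓ c hold
      exact ⟨t', ht'.trans n.lt_succ_self, h⟩
    by_cases hsub : ∀ d ∈ H.children c, d ∈ H.suppFB r f B ℓ n → d ∈ H.suppL r B ℓ
    · exact ⟨n, n.lt_succ_self, hth.mono_left hsub⟩
    push Not at hsub
    obtain ⟨d, hdc, hdS, hdL⟩ := hsub
    obtain _ | m := ℓ
    · rw [suppFB_zero, ← suppL_zero_eq hB] at hdS
      exact absurd hdS hdL
    -- `d` needed feedback from its parent `c`, which therefore was already supported earlier
    obtain ⟨td, htd, hdth⟩ := IH n n.lt_succ_self m d hdS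
    have hdlev : H.level d = m + 1 := by have := H.children_level c hcC d hdc; omega
    have hcS : c ∈ H.suppFB r f B (m + 2) td :=
      hT.mem_of_meetsThreshold_of_notMem_suppL hcC hdc hdlev hdL
        (fun p hp => by
          rw [hclev]; exact (Finset.mem_filter.mp (suppFB_subset_filter_level hB _ _ hp)).2)
        hdth
    obtain ⟨t', ht', h⟩ := IH td (htd.trans n.lt_succ_self) (m + 1) c hcS
    exact ⟨t', by omega, h⟩

theorem IsTree.suppFB_subset_suppFB_two_mul_L_sub (hT : H.IsTree) (hf : 0 ≤ f)
    (hB : ∀ b ∈ B, b ∈ H.concepts ∧ H.level b = 0) (t : ℕ) :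
    ∀ ℓ, H.suppFB r f B ℓ t ⊆ H.suppFB r f B ℓ (2 * H.L - ℓ) := by
  induction t using Nat.strong_induction_on with
  | _ t IH =>
    rintro (_ | ℓ) c hc
    · simpa using hc
    obtain ⟨t', ht', hth⟩ := hT.exists_lt_meetsThreshold_suppL hB t ℓ c hc
    obtain ⟨hcC, hclev⟩ := Finset.mem_filter.mp (suppFB_subset_filter_level hB _ _ hc)
    have hℓL : ℓ + 1 ≤ H.L := hclev ▸ H.level_le c hcC
    have hth' : H.MeetsThreshold r f (H.suppFB r f B ℓ (2 * H.L - (ℓ + 2)))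
        (H.suppFB r f B (ℓ + 2) (2 * H.L - (ℓ + 2))) c := by
      refine (hth.mono_left fun d _ hd => ?_).mono_right hf fun p _ hp => IH t' ht' (ℓ + 2) hp
      exact suppFB_monotone H r f B ℓ (by omega) (suppL_subset_suppFB hf hB ℓ hd)
    have := (mem_suppFB_succ_succ hf).mpr ⟨hcC, hclev, hth'⟩
    rwa [show 2 * H.L - (ℓ + 2) + 1 = 2 * H.L - (ℓ + 1) by omega] at this

end ConceptHierarchy

section Network

variable {α ν : Type} [DecidableEq α] {H : ConceptHierarchy α} {rep : α → ν} {c : α}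

open ConceptHierarchy

theorem fbWeight_rep_eq (f : ℝ)
    (hrep_inj : ∀ c ∈ H.concepts, ∀ c' ∈ H.concepts, rep c = rep c' → c = c')
    (hc : c ∈ H.concepts) (v : ν) :
    fbWeight H rep f v (rep c) = (if v ∈ (H.children c).image rep then 1 else 0) +
      (if v ∈ (H.parents c).image rep then f else 0) := by
  have hchild : (∃ p ∈ H.concepts, ∃ d ∈ H.children p, v = rep d ∧ rep c = rep p) ↔
      v ∈ (H.children c).image rep := by
    refine ⟨fun ⟨p, hp, d, hd, hv, hcp⟩ => ?_, fun hv => ?_⟩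
    · obtain rfl := hrep_inj c hc p hp hcp
      exact Finset.mem_image.mpr ⟨d, hd, hv.symm⟩
    · obtain ⟨d, hd, rfl⟩ := Finset.mem_image.mp hv
      exact ⟨c, hc, d, hd, rfl, rfl⟩
  have hparent : (∃ p ∈ H.concepts, ∃ d ∈ H.children p, v = rep p ∧ rep c = rep d) ↔
      v ∈ (H.parents c).image rep := by
    refine ⟨fun ⟨p, hp, d, hd, hv, hcd⟩ => ?_, fun hv => ?_⟩
    · obtain rfl := hrep_inj c hc d (H.children_mem p hp d hd) hcd
      exact Finset.mem_image.mpr ⟨p, Finset.mem_filter.mpr ⟨hp, hd⟩, hv.symm⟩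
    · obtain ⟨p, hp, rfl⟩ := Finset.mem_image.mp hv
      obtain ⟨hpC, hcp⟩ := Finset.mem_filter.mp hp
      exact ⟨p, hpC, c, hcp, rfl, rfl⟩
  -- a child and a parent of `c` differ by two levels, so their reps differ
  have hdisj : v ∈ (H.children c).image rep → v ∉ (H.parents c).image rep := by
    rintro hv hv'
    obtain ⟨d, hd, rfl⟩ := Finset.mem_image.mp hv
    obtain ⟨p, hp, hpd⟩ := Finset.mem_image.mp hv'
    obtain ⟨hpC, hcp⟩ := Finset.mem_filter.mp hp
    obtain rfl := hrep_inj p hpC d (H.children_mem c hc d hd) hpd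
    have := H.children_level c hc p hd
    have := H.children_level p hpC c hcp
    omega
  simp only [fbWeight, hchild, hparent]
  split_ifs <;> simp_all

theorem sum_fbWeight_rep_eq [Fintype ν] (layer : ν → ℕ) (f : ℝ)
    (hrep_inj : ∀ c ∈ H.concepts, ∀ c' ∈ H.concepts, rep c = rep c' → c = c')
    (hrep_layer : ∀ c ∈ H.concepts, layer (rep c) = H.level c) (P : ν → Prop)
    (hc : c ∈ H.concepts) :
    ∑ v ∈ Finset.univ.filter
        (fun v => (layer v + 1 = layer (rep c) ∨ layer v = layer (rep c) + 1) ∧ P v),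
      fbWeight H rep f v (rep c) =
      ((H.children c).filter (fun d => P (rep d))).card +
        f * ((H.parents c).filter (fun p => P (rep p))).card := by
  set F := Finset.univ.filter
    (fun v => (layer v + 1 = layer (rep c) ∨ layer v = layer (rep c) + 1) ∧ P v)
  have hcard : ∀ s ⊆ H.concepts,
      (∀ d ∈ s, layer (rep d) + 1 = layer (rep c) ∨ layer (rep d) = layer (rep c) + 1) →
      (F ∩ s.image rep).card = (s.filter (fun d => P (rep d))).card := by
    intro s hs hlayer
    have : F ∩ s.image rep = (s.filter (fun d => P (rep d))).image rep := by
      ext v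
      simp only [F, Finset.mem_inter, Finset.mem_filter, Finset.mem_univ, true_and,
        Finset.mem_image]
      constructor
      · rintro ⟨⟨_, hv⟩, d, hd, rfl⟩
        exact ⟨d, ⟨hd, hv⟩, rfl⟩
      · rintro ⟨d, ⟨hd, hv⟩, rfl⟩
        exact ⟨⟨hlayer d hd, hv⟩, d, hd, rfl⟩
    rw [this, Finset.card_image_of_injOn fun d hd d' hd' =>
      hrep_inj d (hs (Finset.mem_filter.mp hd).1) d' (hs (Finset.mem_filter.mp hd').1)]
  have hchildren := hcard (H.children c) (H.children_mem c hc) fun d hd => by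
    have := H.children_level c hc d hd
    rw [hrep_layer d (H.children_mem c hc d hd), hrep_layer c hc]; omega
  have hparents := hcard (H.parents c) (Finset.filter_subset _ _) fun p hp => by
    obtain ⟨hpC, hcp⟩ := Finset.mem_filter.mp hp
    have := H.children_level p hpC c hcp
    rw [hrep_layer p hpC, hrep_layer c hc]; omega
  rw [Finset.sum_congr rfl fun v _ => fbWeight_rep_eq f hrep_inj hc v, Finset.sum_add_distrib,
    Finset.sum_ite_mem, Finset.sum_ite_mem, Finset.sum_const, Finset.sum_const, hchildren,
    hparents]
  simp [mul_comm]

theorem firing_rep_iff_mem_suppFB [Fintype ν] (layer : ν → ℕ)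
    (hrep_inj : ∀ c ∈ H.concepts, ∀ c' ∈ H.concepts, rep c = rep c' → c = c')
    (hrep_layer : ∀ c ∈ H.concepts, layer (rep c) = H.level c)
    {r f : ℝ} (hf : 0 ≤ f) (firing : ν → ℕ → Prop) {B : Finset α}
    (hB : ∀ b ∈ B, b ∈ H.concepts ∧ H.level b = 0) {t : ℕ}
    (hpres : ∀ u : ν, layer u = 0 → ∀ s : ℕ, t ≤ s → (firing u s ↔ ∃ b ∈ B, u = rep b))
    (hinit : ∀ u : ν, 1 ≤ layer u → ¬ firing u t)
    (hdyn : ∀ u : ν, 1 ≤ layer u → ∀ s : ℕ, (firing u (s + 1) ↔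
        r * H.k ≤ ∑ v ∈ Finset.univ.filter
            (fun v => (layer v + 1 = layer u ∨ layer v = layer u + 1) ∧ firing v s),
          fbWeight H rep f v u))
    (s : ℕ) : ∀ c ∈ H.concepts, firing (rep c) (t + s) ↔ c ∈ H.suppFB r f B (H.level c) s := by
  have hleaf : ∀ s, ∀ c ∈ H.concepts, H.level c = 0 → (firing (rep c) (t + s) ↔ c ∈ B) :=
    fun s c hc hlev => by
      rw [hpres (rep c) (by rw [hrep_layer c hc, hlev]) _ (Nat.le_add_right t s)]
      exact ⟨fun ⟨b, hb, hcb⟩ => hrep_inj c hc b (hB b hb).1 hcb ▸ hb, fun h => ⟨c, h, rfl⟩⟩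
  induction s with
  | zero =>
    intro c hc
    rcases hlev : H.level c with _ | ℓ
    · simpa using hleaf 0 c hc hlev
    · simpa using hinit (rep c) (by rw [hrep_layer c hc, hlev]; omega)
  | succ s ih =>
    intro c hc
    rcases hlev : H.level c with _ | ℓ
    · simpa using hleaf (s + 1) c hc hlev
    have hinput := sum_fbWeight_rep_eq layer f hrep_inj hrep_layer (firing · (t + s)) hc
    have hactive : ∀ ℓ', ∀ s' ⊆ H.concepts, (∀ d ∈ s', H.level d = ℓ') →
        s'.filter (fun d => firing (rep d) (t + s)) = s' ∩ H.suppFB r f B ℓ' s := by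
      intro ℓ' s' hs' hlev'
      rw [← Finset.filter_mem_eq_inter]
      exact Finset.filter_congr fun d hd => hlev' d hd ▸ ih d (hs' hd)
    rw [← add_assoc, hdyn (rep c) (by rw [hrep_layer c hc, hlev]; omega), hinput,
      mem_suppFB_succ_succ hf, hactive ℓ (H.children c) (H.children_mem c hc) fun d hd => by
        have := H.children_level c hc d hd; omega,
      hactive (ℓ + 2) (H.parents c) (Finset.filter_subset _ _) fun p hp => by
        have := H.children_level p (Finset.mem_filter.mp hp).1 c (Finset.mem_filter.mp hp).2
        omega]
    exact ⟨fun h => ⟨hc, hlev, h⟩, fun h => h.2.2⟩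

end Network

theorem fb_tree_time_bound_general {α ν : Type} [DecidableEq α] [Fintype ν]
    (H : ConceptHierarchy α) (hTree : H.IsTree) (rep : α → ν) (layer : ν → ℕ)
    (hrep_inj : ∀ c ∈ H.concepts, ∀ c' ∈ H.concepts, rep c = rep c' → c = c')
    (hrep_layer : ∀ c ∈ H.concepts, layer (rep c) = H.level c)
    (r f : ℝ) (hf : 0 ≤ f)
    (firing : ν → ℕ → Prop) (B : Finset α)
    (hB : ∀ b ∈ B, b ∈ H.concepts ∧ H.level b = 0) (t : ℕ)
    (hpres : ∀ u : ν, layer u = 0 → ∀ s : ℕ, t ≤ s → (firing u s ↔ ∃ b ∈ B, u = rep b))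
    (hinit : ∀ u : ν, 1 ≤ layer u → ¬ firing u t)
    (hdyn : ∀ u : ν, 1 ≤ layer u → ∀ s : ℕ, (firing u (s + 1) ↔
        r * H.k ≤ ∑ v ∈ Finset.univ.filter
            (fun v => (layer v + 1 = layer u ∨ layer v = layer u + 1) ∧ firing v s),
          fbWeight H rep f v u)) :
    ∀ c ∈ H.concepts, c ∈ H.suppFBSet r f B →
      ∃ s ≤ 2 * H.L, firing (rep c) (t + s) := by
  intro c hc hcS
  obtain ⟨t₁, ℓ, hcℓ⟩ : ∃ t₁ ℓ, c ∈ H.suppFB r f B ℓ t₁ := by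
    simpa [ConceptHierarchy.suppFBSet, ConceptHierarchy.suppFBatTime] using hcS
  have hlev : H.level c = ℓ :=
    (Finset.mem_filter.mp (ConceptHierarchy.suppFB_subset_filter_level hB ℓ t₁ hcℓ)).2
  refine ⟨2 * H.L - ℓ, Nat.sub_le _ _, ?_⟩
  rw [firing_rep_iff_mem_suppFB layer hrep_inj hrep_layer hf firing hB hpres hinit hdyn _ c hc,
    hlev]
  exact hTree.suppFB_subset_suppFB_two_mul_L_sub hf hB t₁ ℓ hcℓ

/-- in the feedback network built from a tree hierarchy with
threshold `τ = rk`, if `B` is presented at all times `≥ t`, every concept in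
`supp_{r,f}(B)` has its rep fire at some time `≤ t + 2L`. -/
theorem fb_tree_time_bound {α ν : Type} [DecidableEq α] [DecidableEq ν] [Fintype ν]
    (H : ConceptHierarchy α) (hTree : H.IsTree) (rep : α → ν) (layer : ν → ℕ)
    (hrep_inj : ∀ c ∈ H.concepts, ∀ c' ∈ H.concepts, rep c = rep c' → c = c')
    (hrep_layer : ∀ c ∈ H.concepts, layer (rep c) = H.level c)
    (r f : ℝ) (hr0 : 0 ≤ r) (hr1 : r ≤ 1) (hf : 0 ≤ f)
    (firing : ν → ℕ → Prop) (B : Finset α)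
    (hB : ∀ b ∈ B, b ∈ H.concepts ∧ H.level b = 0) (t : ℕ)
    (hpres : ∀ u : ν, layer u = 0 → ∀ s : ℕ, t ≤ s → (firing u s ↔ ∃ b ∈ B, u = rep b))
    (hinit : ∀ u : ν, 1 ≤ layer u → ¬ firing u t)
    (hdyn : ∀ u : ν, 1 ≤ layer u → ∀ s : ℕ, (firing u (s + 1) ↔
        r * H.k ≤ ∑ v ∈ Finset.univ.filter
            (fun v => (layer v + 1 = layer u ∨ layer v = layer u + 1) ∧ firing v s),
          fbWeight H rep f v u)) :
    ∀ c ∈ H.concepts, c ∈ H.suppFBSet r f B →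
      ∃ s ≤ 2 * H.L, firing (rep c) (t + s) :=
  fb_tree_time_bound_general H hTree rep layer hrep_inj hrep_layer r f hf firing B hB t hpres hinit
    hdyn
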